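/- Let ψ : ℂ³ → ℂ⁵ be the polynomial map ψ(a,b,c) = (a, c, b², bc, b³), and in coordinates (x, y, z, t, v) on ℂ⁵ let N be the 2×4 matrix with rows (t, v, yz, z²) and (y, z, t, v). Then the image of ψ is exactly the common zero locus in ℂ⁵ of the six 2×2 minors of N. -/
import Mathlib


/-- The parametrisation `ψ(a,b,c) = (a, c, b², bc, b³)` of the (affine cone
over the) divisor `D ⊂ ℙ(1,3,4,5,6)`. -/
def psiD : (Fin 3 → ℂ) → (Fin 5 → ℂ) := fun p =>
  ![p 0, p 2, (p 1) ^ 2, p 1 * p 2, (p 1) ^ 3]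

/-- The first row `(t, v, yz, z²)` of the matrix `N`, as functions of a point
`p ∈ ℂ⁵` with coordinates `x = p 0, y = p 1, z = p 2, t = p 3, v = p 4`. -/
def Nrow1 : Fin 4 → (Fin 5 → ℂ) → ℂ :=
  ![fun p => p 3, fun p => p 4, fun p => p 1 * p 2, fun p => (p 2) ^ 2]

/-- The second row `(y, z, t, v)` of the matrix `N`. -/
def Nrow2 : Fin 4 → (Fin 5 → ℂ) → ℂ :=
  ![fun p => p 1, fun p => p 2, fun p => p 3, fun p => p 4]

/-- Let `ψ : ℂ³ → ℂ⁵` be `ψ(a,b,c) = (a, c, b², bc, b³)`, and let `N` be the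
`2×4` matrix with rows `(t, v, yz, z²)` and `(y, z, t, v)` in coordinates
`(x, y, z, t, v)` on `ℂ⁵`.  Then the image of `ψ` is exactly the common zero
locus in `ℂ⁵` of the six `2×2` minors of `N`. -/
theorem range_psiD_eq_zero_locus_minors :
    Set.range psiD =
      { p : Fin 5 → ℂ | ∀ i j : Fin 4, i < j →
          Nrow1 i p * Nrow2 j p - Nrow1 j p * Nrow2 i p = 0 } := by
  ext p
  constructor
  · rintro ⟨q, rfl⟩ i j _
    fin_cases i <;> fin_cases j <;> simp [psiD, Nrow1, Nrow2] <;> ring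
  · intro hp
    have h01 := hp 0 1 (by decide)
    have h03 := hp 0 3 (by decide)
    have h13 := hp 1 3 (by decide)
    have h02 := hp 0 2 (by decide)
    simp only [Nrow1, Nrow2, Matrix.cons_val_zero, Matrix.cons_val_one, Matrix.head_cons,
      Matrix.cons_val_two, Matrix.tail_cons, Matrix.cons_val_three, Matrix.cons_val_fin_one,
      sub_eq_zero] at h01 h03 h13 h02
    by_cases hz : p 2 = 0
    · -- then v = 0 and t = 0
      have hv : p 4 = 0 := by
        have : p 4 ^ 2 = 0 := by rw [sq]; rw [hz] at h13; simpa using h13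
        exact pow_eq_zero_iff (n := 2) (by norm_num) |>.mp this
      have ht : p 3 = 0 := by
        have : p 3 ^ 2 = 0 := by
          rw [sq]; rw [hz] at h02; simpa using h02
        exact pow_eq_zero_iff (n := 2) (by norm_num) |>.mp this
      refine ⟨![p 0, 0, p 1], ?_⟩
      funext k
      fin_cases k <;> simp [psiD, hz, hv, ht]
    · refine ⟨![p 0, p 4 / p 2, p 1], ?_⟩
      have hb2 : (p 4 / p 2) ^ 2 = p 2 := by
        field_simp
        linear_combination h13
      have hb3 : (p 4 / p 2) ^ 3 = p 4 := by
        field_simp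
        linear_combination p 4 * h13
      have hbc : p 4 / p 2 * p 1 = p 3 := by
        field_simp
        linear_combination -h01
      funext k
      fin_cases k <;> simp [psiD, hb2, hb3, hbc]
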